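/- Let n ≥ 2, let ε₀ > 0 be a real number, and let λ₁ ≥ λ₂ ≥ … ≥ λₙ be real numbers with ∑_{i=1}^n arctan(λᵢ) ≥ (n−2)·π/2 + ε₀ and with λₙ < 0. Then ∑_{i=1}^n 1/λᵢ ≤ −tan(ε₀/2). (Note that the hypotheses force λᵢ > 0 for all i < n, so all the reciprocals are defined.) -/

import Mathlib

/-!
Put `θᵢ = π/2 - arctan λᵢ ∈ (0, π)`, so that `1/λᵢ = tan θᵢ`, `∑ θᵢ ≤ π - ε₀` and `θₙ > π/2`.
On `[0, π/2)` the tangent is superadditive, so the angles `θᵢ` with `i < n`, whose sum `S`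
satisfies `S + ε₀ ≤ π - θₙ < π/2`, contribute at most `tan S`, while
`tan θₙ = -tan (π - θₙ) ≤ -tan (S + ε₀) ≤ -tan S - tan ε₀`.
Hence `∑ 1/λᵢ ≤ -tan ε₀ ≤ -tan (ε₀/2)`.
-/

open Real Finset

namespace Real

theorem tan_add_tan_le_tan_add {a b : ℝ} (ha : 0 ≤ a) (hb : 0 ≤ b) (hab : a + b < π / 2) :
    tan a + tan b ≤ tan (a + b) := by
  have hcos : ∀ x, 0 ≤ x → x < π / 2 → 0 < cos x := fun x h₀ h₁ =>
    cos_pos_of_mem_Ioo ⟨by linarith [pi_pos], h₁⟩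
  have hca := hcos a ha (by linarith)
  have hcb := hcos b hb (by linarith)
  have hsum : tan a + tan b = sin (a + b) / (cos a * cos b) := by
    rw [tan_eq_sin_div_cos, tan_eq_sin_div_cos, sin_add]
    field_simp
  -- `cos (a + b) = cos a cos b - sin a sin b` is the smaller denominator
  have hden : cos (a + b) ≤ cos a * cos b := by
    have := mul_nonneg (sin_nonneg_of_nonneg_of_le_pi ha (by linarith))
      (sin_nonneg_of_nonneg_of_le_pi hb (by linarith))
    rw [cos_add]
    linarith
  rw [hsum, tan_eq_sin_div_cos]
  exact div_le_div_of_nonneg_left (sin_nonneg_of_nonneg_of_le_pi (by linarith) (by linarith))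
    (hcos _ (by linarith) hab) hden

theorem sum_tan_le_tan_sum {ι : Type*} (s : Finset ι) (θ : ι → ℝ) (hθ : ∀ i ∈ s, 0 ≤ θ i)
    (hs : ∑ i ∈ s, θ i < π / 2) : ∑ i ∈ s, tan (θ i) ≤ tan (∑ i ∈ s, θ i) := by
  induction s using Finset.cons_induction with
  | empty => simp
  | cons a s ha ih =>
    simp only [sum_cons] at hs ⊢
    have hθs : ∀ i ∈ s, 0 ≤ θ i := fun i hi => hθ i (mem_cons_of_mem hi)
    have hrest : 0 ≤ ∑ i ∈ s, θ i := sum_nonneg hθs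
    have hθa : 0 ≤ θ a := hθ a (mem_cons_self a s)
    linarith [ih hθs (by linarith), tan_add_tan_le_tan_add hθa hrest hs]

theorem sum_tan_le_neg_tan {ι : Type*} [Fintype ι] [DecidableEq ι] (θ : ι → ℝ) (j : ι)
    (hθ : ∀ i, 0 ≤ θ i) (hθj : π / 2 < θ j) {ε : ℝ} (hε : 0 ≤ ε)
    (hsum : ∑ i, θ i ≤ π - ε) : ∑ i, tan (θ i) ≤ -tan ε := by
  rw [← add_sum_erase _ _ (mem_univ j)] at hsum ⊢
  set S := ∑ i ∈ univ.erase j, θ i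
  have hS : 0 ≤ S := sum_nonneg fun i _ => hθ i
  have hSε : S + ε < π / 2 := by linarith
  have hrest : ∑ i ∈ univ.erase j, tan (θ i) ≤ tan S :=
    sum_tan_le_tan_sum _ θ (fun i _ => hθ i) (by linarith)
  have hj : tan (θ j) ≤ -tan (S + ε) := by
    rw [← neg_neg (tan (θ j)), ← tan_pi_sub]
    refine neg_le_neg (strictMonoOn_tan.monotoneOn ?_ ?_ (by linarith)) <;>
      constructor <;> linarith
  linarith [tan_add_tan_le_tan_add hS hε hSε]

end Real

/-- The reciprocal-sum estimate: if `λ₁ ≥ … ≥ λₙ` satisfy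
`∑ arctan λᵢ ≥ (n-2)π/2 + ε₀` with `ε₀ > 0` and `λₙ < 0`, then
`∑ 1/λᵢ ≤ -tan(ε₀/2)`. -/
theorem dHYM_reciprocal_sum_estimate
    (n : ℕ) (hn : 2 ≤ n) (ε₀ : ℝ) (hε : 0 < ε₀)
    (lam : Fin n → ℝ)
    (hsum : ((n : ℝ) - 2) * π / 2 + ε₀ ≤ ∑ i, Real.arctan (lam i))
    (hneg : lam ⟨n - 1, by omega⟩ < 0) :
    ∑ i, 1 / lam i ≤ -Real.tan (ε₀ / 2) := by
  set θ : Fin n → ℝ := fun i => π / 2 - arctan (lam i)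
  have hrec : ∀ i, 1 / lam i = tan (θ i) := fun i => by
    rw [tan_pi_div_two_sub, tan_arctan, one_div]
  have hθ : ∀ i, 0 < θ i := fun i => sub_pos.2 (arctan_lt_pi_div_two _)
  have hθlast : π / 2 < θ ⟨n - 1, by omega⟩ := by
    have := arctan_lt_zero.2 hneg
    simp only [θ]
    linarith
  have hθsum : ∑ i, θ i ≤ π - ε₀ := by
    simp only [θ, sum_sub_distrib, sum_const, card_univ, Fintype.card_fin, nsmul_eq_mul]
    linarith
  have hε₀ : ε₀ < π / 2 := by
    linarith [single_le_sum (fun i _ => (hθ i).le) (mem_univ (⟨n - 1, by omega⟩ : Fin n))]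
  calc ∑ i, 1 / lam i = ∑ i, tan (θ i) := sum_congr rfl fun i _ => hrec i
    _ ≤ -tan ε₀ := sum_tan_le_neg_tan θ _ (fun i => (hθ i).le) hθlast hε.le hθsum
    _ ≤ -tan (ε₀ / 2) :=
      neg_le_neg (tan_lt_tan_of_nonneg_of_lt_pi_div_two (by positivity) hε₀ (by linarith)).le
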